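/- Any solution (a_{jkℓ}) ∈ {0,1}^27 of the 19-equation system for 1-number-conserving 3-VFCA rules satisfies a₂₂₂ = a₂₂₃ = a₂₃₂ = a₂₃₃ = a₃₂₂ = a₃₂₃ = a₃₃₂ = a₃₃₃ = 0 and a₁₁₁ = 1. -/
import Mathlib


def NCsys (a : Fin 3 → Fin 3 → Fin 3 → ℤ) : Prop :=
  a 2 2 2 = 0 ∧
  a 0 2 2 + a 2 0 2 + a 2 2 0 - 3 * a 2 2 2 = 1 ∧
  a 1 2 2 + a 2 1 2 + a 2 2 1 - 3 * a 2 2 2 = 0 ∧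
  a 0 0 2 - a 0 2 2 + a 2 0 0 - 2 * a 2 0 2 - a 2 2 0 + 2 * a 2 2 2 = 0 ∧
  a 1 0 2 - a 1 2 2 - a 2 0 2 + a 2 1 0 - a 2 1 2 - a 2 2 0 + 2 * a 2 2 2 = 0 ∧
  a 0 1 2 - a 0 2 2 + a 2 0 1 - a 2 0 2 - a 2 1 2 - a 2 2 1 + 2 * a 2 2 2 = 0 ∧
  a 1 1 2 - a 1 2 2 + a 2 1 1 - 2 * a 2 1 2 - a 2 2 1 + 2 * a 2 2 2 = 0 ∧
  a 0 2 0 - a 0 2 2 - a 2 2 0 + a 2 2 2 = 0 ∧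
  a 1 2 0 - a 1 2 2 - a 2 2 0 + a 2 2 2 = 0 ∧
  a 0 2 1 - a 0 2 2 - a 2 2 1 + a 2 2 2 = 0 ∧
  a 1 2 1 - a 1 2 2 - a 2 2 1 + a 2 2 2 = 0 ∧
  a 0 0 0 - a 0 0 2 - a 0 2 0 + a 0 2 2 - a 2 0 0 + a 2 0 2 + a 2 2 0 - a 2 2 2 = 0 ∧
  a 1 0 0 - a 1 0 2 - a 1 2 0 + a 1 2 2 - a 2 0 0 + a 2 0 2 + a 2 2 0 - a 2 2 2 = 0 ∧
  a 0 1 0 - a 0 1 2 - a 0 2 0 + a 0 2 2 - a 2 1 0 + a 2 1 2 + a 2 2 0 - a 2 2 2 = 0 ∧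
  a 1 1 0 - a 1 1 2 - a 1 2 0 + a 1 2 2 - a 2 1 0 + a 2 1 2 + a 2 2 0 - a 2 2 2 = 0 ∧
  a 0 0 1 - a 0 0 2 - a 0 2 1 + a 0 2 2 - a 2 0 1 + a 2 0 2 + a 2 2 1 - a 2 2 2 = 0 ∧
  a 1 0 1 - a 1 0 2 - a 1 2 1 + a 1 2 2 - a 2 0 1 + a 2 0 2 + a 2 2 1 - a 2 2 2 = 0 ∧
  a 0 1 1 - a 0 1 2 - a 0 2 1 + a 0 2 2 - a 2 1 1 + a 2 1 2 + a 2 2 1 - a 2 2 2 = 0 ∧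
  a 1 1 1 - a 1 1 2 - a 1 2 1 + a 1 2 2 - a 2 1 1 + a 2 1 2 + a 2 2 1 - a 2 2 2 = 0

set_option maxHeartbeats 2000000 in
theorem stmt_15 (a : Fin 3 → Fin 3 → Fin 3 → ℤ)
    (h01 : ∀ j k l, a j k l = 0 ∨ a j k l = 1) (hsys : NCsys a) :
    a 1 1 1 = 0 ∧ a 1 1 2 = 0 ∧ a 1 2 1 = 0 ∧ a 1 2 2 = 0 ∧
      a 2 1 1 = 0 ∧ a 2 1 2 = 0 ∧ a 2 2 1 = 0 ∧ a 2 2 2 = 0 ∧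
      a 0 0 0 = 1 := by
  unfold NCsys at hsys
  obtain ⟨e1,e2,e3,e4,e5,e6,e7,e8,e9,e10,e11,e12,e13,e14,e15,e16,e17,e18,e19⟩ := hsys
  have hb : ∀ j k l, 0 ≤ a j k l ∧ a j k l ≤ 1 := fun j k l => by
    rcases h01 j k l with h|h <;> simp [h]
  have b1 := hb 1 1 1
  have b2 := hb 1 1 2
  have b3 := hb 1 2 1
  have b4 := hb 1 2 2
  have b5 := hb 2 1 1
  have b6 := hb 2 1 2
  have b7 := hb 2 2 1
  have b8 := hb 0 2 2
  have b9 := hb 2 0 2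
  have b10 := hb 2 2 0
  have b11 := hb 0 0 2
  have b12 := hb 2 0 0
  have b13 := hb 0 2 0
  have b14 := hb 0 0 0
  omega
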